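/- Let d ≥ 1, λ ∈ ℂ with Im λ ≠ 0, and f ∈ 𝓢(ℝ^{1+d}, ℂ). Then 4π²·q(ζ) + λ ≠ 0 for every ζ ∈ ℝ^{1+d}, the function ζ ↦ −(Ff)(ζ)/(4π²·q(ζ) + λ) belongs to 𝓢(ℝ^{1+d}, ℂ), and the Schwartz function u := F⁻¹( ζ ↦ −(Ff)(ζ)/(4π²·q(ζ) + λ) ) satisfies □u = λu + f. -/

import Mathlib

/-!
On the Fourier side `□` is multiplication by `-4π²q`, so `□u = λu + f` becomes
`-(4π²q + λ) 𝓕u = 𝓕f`. As `q` is real, `‖4π²q + λ‖ ≥ |Im λ| > 0`, and the reciprocal of a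
function of temperate growth that is bounded away from zero again has temperate growth: it is
the composition with `z ↦ z⁻¹`, whose derivatives are bounded away from the origin. Hence
`-(4π²q + λ)⁻¹ 𝓕f` is a Schwartz function, and its inverse Fourier transform is the solution.
-/

open MeasureTheory SchwartzMap Complex
open scoped SchwartzMap

abbrev Spacetime (d : ℕ) := EuclideanSpace ℝ (Fin (d + 1))

/-- The d'Alembertian `□f = ∂_t² f − Σ_{j=1}^d ∂_{x_j}² f` as a continuous linear operator
on the Schwartz space `𝓢(ℝ^{1+d}, ℂ)`. -/
noncomputable def dAlembertian (d : ℕ) :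
    𝓢(Spacetime d, ℂ) →L[ℂ] 𝓢(Spacetime d, ℂ) :=
  (LineDeriv.lineDerivOpCLM ℂ 𝓢(Spacetime d, ℂ) (EuclideanSpace.single 0 1 : Spacetime d)).comp
      (LineDeriv.lineDerivOpCLM ℂ 𝓢(Spacetime d, ℂ) (EuclideanSpace.single 0 1 : Spacetime d))
    - ∑ j : Fin d,
      (LineDeriv.lineDerivOpCLM ℂ 𝓢(Spacetime d, ℂ) (EuclideanSpace.single j.succ 1 : Spacetime d)).comp
        (LineDeriv.lineDerivOpCLM ℂ 𝓢(Spacetime d, ℂ) (EuclideanSpace.single j.succ 1 : Spacetime d))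
open Real in
/-- The Minkowski quadratic form `q(ζ) = τ² − ‖ξ‖²` in the dual variables
`ζ = (τ, ξ) ∈ ℝ × ℝ^d`. -/
noncomputable def minkQ (d : ℕ) (ζ : Spacetime d) : ℝ :=
  ζ 0 ^ 2 - ∑ j : Fin d, ζ j.succ ^ 2

open FourierTransform LineDeriv Real
open scoped Nat

section
variable {𝕜 : Type*} [RCLike 𝕜]

theorem norm_iteratedFDeriv_inv_le (n : ℕ) {r : ℝ} (hr : 0 < r) {z : 𝕜} (hz : r < ‖z‖) :
    ‖iteratedFDeriv ℝ n (fun w : 𝕜 ↦ w⁻¹) z‖ ≤ n ! * r⁻¹ ^ (n + 1) := by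
  have hz0 : z ≠ 0 := norm_pos_iff.mp (hr.trans hz)
  rw [← (contDiffAt_inv 𝕜 hz0).restrictScalars_iteratedFDeriv (𝕜 := ℝ), Function.comp_apply,
    ContinuousMultilinearMap.norm_restrictScalars, norm_iteratedFDeriv_eq_norm_iteratedDeriv,
    iteratedDeriv_eq_iterate, iter_deriv_inv, norm_mul, norm_mul, norm_pow,
    norm_neg, norm_one, one_pow, one_mul, RCLike.norm_natCast, norm_zpow,
    show (-1 - n : ℤ) = -((n + 1 : ℕ) : ℤ) by push_cast; ring, zpow_neg, zpow_natCast, ← inv_pow]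
  gcongr

theorem Function.HasTemperateGrowth.inv {E : Type*} [NormedAddCommGroup E] [NormedSpace ℝ E]
    {h : E → 𝕜} (hh : h.HasTemperateGrowth) {ε : ℝ} (hε : 0 < ε) (hbound : ∀ x, ε ≤ ‖h x‖) :
    (fun x ↦ (h x)⁻¹).HasTemperateGrowth := by
  -- an open set containing the range of `h` on which all derivatives of `z ↦ z⁻¹` are bounded
  set t : Set 𝕜 := {z | ε / 2 < ‖z‖}
  have ht : IsOpen t := isOpen_lt continuous_const continuous_norm
  have hrange : Set.range h ⊆ t := by
    rintro _ ⟨x, rfl⟩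
    exact (half_lt_self hε).trans_le (hbound x)
  refine hh.comp' (g := fun z ↦ z⁻¹) hrange ht.uniqueDiffOn ?_ fun N ↦ ?_
  · exact (contDiffOn_inv 𝕜).restrict_scalars ℝ |>.mono fun z hz ↦
      norm_pos_iff.mp ((half_pos hε).trans hz)
  refine ⟨0, N ! * (1 + (ε / 2)⁻¹) ^ (N + 1), by positivity, fun n hn z hz ↦ ?_⟩
  rw [iteratedFDerivWithin_of_isOpen n ht hz, pow_zero, mul_one]
  calc ‖iteratedFDeriv ℝ n (fun w : 𝕜 ↦ w⁻¹) z‖ ≤ n ! * (ε / 2)⁻¹ ^ (n + 1) :=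
        norm_iteratedFDeriv_inv_le n (half_pos hε) hz
    _ ≤ N ! * (1 + (ε / 2)⁻¹) ^ (n + 1) := by
        gcongr
        exact le_add_of_nonneg_left zero_le_one
    _ ≤ N ! * (1 + (ε / 2)⁻¹) ^ (N + 1) := by
        gcongr
        exact le_add_of_nonneg_right (by positivity)
end

section
variable {V : Type*} [NormedAddCommGroup V] [InnerProductSpace ℝ V] [FiniteDimensional ℝ V]
  [MeasurableSpace V] [BorelSpace V]

theorem fourier_lineDerivOp_apply (g : 𝓢(V, ℂ)) (v ξ : V) :
    𝓕 (∂_{v} g) ξ = 2 * π * I * (inner ℝ ξ v : ℝ) * 𝓕 g ξ := by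
  have hv : (inner ℝ · v).HasTemperateGrowth := ((innerSL ℝ).flip v).hasTemperateGrowth
  rw [fourier_lineDerivOp_eq, smul_apply, smulLeftCLM_apply_apply hv, smul_eq_mul, real_smul]
  ring

theorem fourier_lineDerivOp_lineDerivOp_apply (g : 𝓢(V, ℂ)) (v ξ : V) :
    𝓕 (∂_{v} (∂_{v} g)) ξ = -(2 * π * inner ℝ ξ v : ℝ) ^ 2 * 𝓕 g ξ := by
  rw [fourier_lineDerivOp_apply, fourier_lineDerivOp_apply]
  push_cast
  linear_combination (2 * π * (inner ℝ ξ v : ℂ)) ^ 2 * 𝓕 g ξ * I_sq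

end

theorem fourier_dAlembertian_apply (d : ℕ) (u : 𝓢(Spacetime d, ℂ)) (ζ : Spacetime d) :
    𝓕 (dAlembertian d u) ζ = -(4 * π ^ 2 * minkQ d ζ : ℝ) * 𝓕 u ζ := by
  simp only [dAlembertian, _root_.sum_apply, ContinuousLinearMap.comp_apply,
    lineDerivOpCLM_apply, sub_eq_add_neg, FourierAdd.fourier_add, FourierTransform.fourier_neg,
    FourierTransform.fourier_sum, add_apply, neg_apply, fourier_lineDerivOp_lineDerivOp_apply,
    EuclideanSpace.inner_single_right, conj_trivial, one_mul, minkQ]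
  push_cast
  simp only [neg_mul, Finset.sum_neg_distrib, mul_pow, ← Finset.sum_mul, ← Finset.mul_sum]
  ring

theorem EuclideanSpace.hasTemperateGrowth_apply {ι : Type*} [Fintype ι] (i : ι) :
    (fun x : EuclideanSpace ℝ ι ↦ x i).HasTemperateGrowth :=
  (EuclideanSpace.proj i).hasTemperateGrowth

theorem minkQ_hasTemperateGrowth (d : ℕ) : (minkQ d).HasTemperateGrowth :=
  ((EuclideanSpace.hasTemperateGrowth_apply 0).pow 2).sub
    (.sum fun j _ ↦ (EuclideanSpace.hasTemperateGrowth_apply j.succ).pow 2)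

theorem abs_im_le_norm_ofReal_add (r : ℝ) (z : ℂ) : |z.im| ≤ ‖(r : ℂ) + z‖ := by
  simpa using abs_im_le_norm ((r : ℂ) + z)

theorem fourier_solution_minkowski_general (d : ℕ)
    (lam : ℂ) (hlam : lam.im ≠ 0) (f : 𝓢(Spacetime d, ℂ)) :
    (∀ ζ : Spacetime d, ((4 * π ^ 2 * minkQ d ζ : ℝ) : ℂ) + lam ≠ 0) ∧
    ∃ w : 𝓢(Spacetime d, ℂ),
      (∀ ζ : Spacetime d,
        w ζ = -(FourierTransform.fourierCLE ℂ 𝓢(Spacetime d, ℂ) f ζ)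
          / (((4 * π ^ 2 * minkQ d ζ : ℝ) : ℂ) + lam)) ∧
      dAlembertian d ((FourierTransform.fourierCLE ℂ 𝓢(Spacetime d, ℂ)).symm w)
        = lam • (FourierTransform.fourierCLE ℂ 𝓢(Spacetime d, ℂ)).symm w + f := by
  set D : Spacetime d → ℂ := fun ζ ↦ ((4 * π ^ 2 * minkQ d ζ : ℝ) : ℂ) + lam
  have hD_lower (ζ : Spacetime d) : |lam.im| ≤ ‖D ζ‖ := abs_im_le_norm_ofReal_add _ lam
  have hD_ne (ζ : Spacetime d) : D ζ ≠ 0 := fun h ↦ by simpa [h, hlam] using hD_lower ζ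
  have hD : D.HasTemperateGrowth :=
    (ofRealCLM.hasTemperateGrowth.comp ((Function.HasTemperateGrowth.const _).mul
      (minkQ_hasTemperateGrowth d))).add (.const lam)
  have hm : (fun ζ ↦ -(D ζ)⁻¹).HasTemperateGrowth := (hD.inv (abs_pos.2 hlam) hD_lower).neg
  refine ⟨hD_ne, smulLeftCLM ℂ (fun ζ ↦ -(D ζ)⁻¹) (𝓕 f), fun ζ ↦ ?_, ?_⟩
  · rw [smulLeftCLM_apply_apply hm, fourierCLE_apply, smul_eq_mul, neg_div, div_eq_inv_mul,
      neg_mul]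
  · apply (fourierCLE ℂ 𝓢(Spacetime d, ℂ)).injective
    ext ζ
    simp only [fourierCLE_apply, fourierCLE_symm_apply, fourier_dAlembertian_apply,
      FourierAdd.fourier_add, FourierSMul.fourier_smul, fourier_fourierInv_eq, add_apply,
      smul_apply, smulLeftCLM_apply_apply hm, smul_eq_mul]
    field_simp [hD_ne ζ]
    ring

open Real in
/-- For `Im λ ≠ 0` and `f` Schwartz: the denominator `4π²·q(ζ) + λ` never vanishes, the
function `ζ ↦ −(Ff)(ζ)/(4π²·q(ζ) + λ)` is Schwartz, and `u := F⁻¹` of it solves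
`□u = λu + f`. -/
theorem fourier_solution_minkowski (d : ℕ) (hd : 1 ≤ d)
    (lam : ℂ) (hlam : lam.im ≠ 0) (f : 𝓢(Spacetime d, ℂ)) :
    (∀ ζ : Spacetime d, ((4 * π ^ 2 * minkQ d ζ : ℝ) : ℂ) + lam ≠ 0) ∧
    ∃ w : 𝓢(Spacetime d, ℂ),
      (∀ ζ : Spacetime d,
        w ζ = -(FourierTransform.fourierCLE ℂ 𝓢(Spacetime d, ℂ) f ζ)
          / (((4 * π ^ 2 * minkQ d ζ : ℝ) : ℂ) + lam)) ∧
      dAlembertian d ((FourierTransform.fourierCLE ℂ 𝓢(Spacetime d, ℂ)).symm w)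
        = lam • (FourierTransform.fourierCLE ℂ 𝓢(Spacetime d, ℂ)).symm w + f :=
  fourier_solution_minkowski_general d lam hlam f
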